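/- arXiv:2104.02035 — 4 statements merged into one kernel-verified Lean document; each statement's English description precedes it below -/
import Mathlib

section
/- Let H be an infinite-dimensional complex Hilbert space and let D, X be bounded linear operators on H. If ε > 0 and ‖DX − XD − 1‖ ≤ ε (operator norm, 1 the identity operator), then ‖D‖·‖X‖ ≥ (1/2)·log(1/ε). -/
private lemma popa_comm_pow {A : Type*} [Ring A] (D X : A) (n : ℕ) :
    D * X ^ n - X ^ n * D
      = ∑ k ∈ Finset.range n, X ^ k * (D * X - X * D) * X ^ (n - 1 - k) := by
  induction n with
  | zero => simp
  | succ n ih =>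
    have h1 : D * X ^ (n+1) - X ^ (n+1) * D
        = (D * X ^ n - X ^ n * D) * X + X ^ n * (D * X - X * D) := by
      rw [pow_succ]; noncomm_ring
    rw [h1, ih, Finset.sum_mul, Finset.sum_range_succ]
    simp only [Nat.add_sub_cancel, Nat.sub_self, pow_zero, mul_one]
    congr 1
    refine Finset.sum_congr rfl fun k hk => ?_
    have hk' : k < n := Finset.mem_range.mp hk
    have : n - k = (n - 1 - k) + 1 := by omega
    rw [this, pow_succ, ← mul_assoc]

private lemma popa_decomp {A : Type*} [Ring A] [Module ℝ A] [SMulCommClass ℝ A A]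
    [IsScalarTower ℝ A A] (D X : A) (n : ℕ) :
    D * X ^ (n+1) - X ^ (n+1) * D
      = ((n : ℝ) + 1) • X ^ n
        + ∑ k ∈ Finset.range (n+1), X ^ k * (D * X - X * D - 1) * X ^ (n - k) := by
  rw [popa_comm_pow]
  have : ∀ k ∈ Finset.range (n+1),
      X ^ k * (D * X - X * D) * X ^ (n + 1 - 1 - k)
        = X ^ n + X ^ k * (D * X - X * D - 1) * X ^ (n - k) := by
    intro k hk
    have hk' : k < n + 1 := Finset.mem_range.mp hk
    have h1 : n + 1 - 1 - k = n - k := by omega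
    have h2 : k + (n - k) = n := by omega
    rw [h1]
    have : X ^ k * (D * X - X * D) * X ^ (n - k)
        = X ^ k * (D * X - X * D - 1) * X ^ (n - k) + X ^ k * X ^ (n - k) := by
      noncomm_ring
    rw [this, ← pow_add, h2]; abel
  rw [Finset.sum_congr rfl this, Finset.sum_add_distrib, Finset.sum_const,
    Finset.card_range]
  congr 1
  rw [← Nat.cast_smul_eq_nsmul ℝ]
  push_cast
  ring_nf

private lemma popa_recursion {A : Type*} [NormedRing A] [NormOneClass A] [NormedAlgebra ℝ A]
    (D X : A) {ε : ℝ} (hX : ‖X‖ ≤ 1) (hE : ‖D * X - X * D - 1‖ ≤ ε) (n : ℕ) :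
    ((n : ℝ) + 1) * ‖X ^ n‖ ≤ 2 * ‖D‖ * ‖X ^ (n+1)‖ + ((n : ℝ) + 1) * ε := by
  have hd := popa_decomp D X n
  have hsmul : ((n : ℝ) + 1) • X ^ n
      = (D * X ^ (n+1) - X ^ (n+1) * D)
        - ∑ k ∈ Finset.range (n+1), X ^ k * (D * X - X * D - 1) * X ^ (n - k) := by
    rw [hd]; abel
  have h0 : ‖((n : ℝ) + 1) • X ^ n‖ = ((n : ℝ) + 1) * ‖X ^ n‖ := by
    rw [norm_smul, Real.norm_of_nonneg (by positivity)]
  have h1 : ‖D * X ^ (n+1) - X ^ (n+1) * D‖ ≤ 2 * ‖D‖ * ‖X ^ (n+1)‖ := by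
    calc ‖D * X ^ (n+1) - X ^ (n+1) * D‖
        ≤ ‖D * X ^ (n+1)‖ + ‖X ^ (n+1) * D‖ := norm_sub_le _ _
      _ ≤ ‖D‖ * ‖X ^ (n+1)‖ + ‖X ^ (n+1)‖ * ‖D‖ := by
          gcongr <;> exact norm_mul_le _ _
      _ = 2 * ‖D‖ * ‖X ^ (n+1)‖ := by ring
  have hε0 : 0 ≤ ε := le_trans (norm_nonneg _) hE
  have h2 : ‖∑ k ∈ Finset.range (n+1), X ^ k * (D * X - X * D - 1) * X ^ (n - k)‖
      ≤ ((n : ℝ) + 1) * ε := by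
    calc ‖∑ k ∈ Finset.range (n+1), X ^ k * (D * X - X * D - 1) * X ^ (n - k)‖
        ≤ ∑ k ∈ Finset.range (n+1), ‖X ^ k * (D * X - X * D - 1) * X ^ (n - k)‖ :=
          norm_sum_le _ _
      _ ≤ ∑ _k ∈ Finset.range (n+1), ε := by
          refine Finset.sum_le_sum fun k _ => ?_
          have b1 : ‖X ^ k‖ ≤ 1 := (norm_pow_le X k).trans (pow_le_one₀ (norm_nonneg X) hX)
          have b2 : ‖X ^ (n - k)‖ ≤ 1 :=
            (norm_pow_le X (n - k)).trans (pow_le_one₀ (norm_nonneg X) hX)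
          calc ‖X ^ k * (D * X - X * D - 1) * X ^ (n - k)‖
              ≤ ‖X ^ k * (D * X - X * D - 1)‖ * ‖X ^ (n - k)‖ := norm_mul_le _ _
            _ ≤ (‖X ^ k‖ * ‖D * X - X * D - 1‖) * ‖X ^ (n - k)‖ := by
                gcongr; exact norm_mul_le _ _
            _ ≤ 1 * ε * 1 := by gcongr
            _ = ε := by ring
      _ = ((n : ℝ) + 1) * ε := by
          rw [Finset.sum_const, Finset.card_range, nsmul_eq_mul]; push_cast; ring
  calc ((n : ℝ) + 1) * ‖X ^ n‖ = ‖((n : ℝ) + 1) • X ^ n‖ := h0.symm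
    _ ≤ ‖D * X ^ (n+1) - X ^ (n+1) * D‖
        + ‖∑ k ∈ Finset.range (n+1), X ^ k * (D * X - X * D - 1) * X ^ (n - k)‖ := by
          rw [hsmul]; exact norm_sub_le _ _
    _ ≤ 2 * ‖D‖ * ‖X ^ (n+1)‖ + ((n : ℝ) + 1) * ε := add_le_add h1 h2

private lemma popa_key {A : Type*} [NormedRing A] [NormOneClass A] [NormedAlgebra ℝ A]
    (D X : A) {ε : ℝ} (hX : ‖X‖ ≤ 1) (hE : ‖D * X - X * D - 1‖ ≤ ε) :
    1 ≤ ε * Real.exp (2 * ‖D‖) := by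
  set d : ℝ := 2 * ‖D‖ with hd_def
  have hd : 0 ≤ d := by positivity
  have hε0 : 0 ≤ ε := le_trans (norm_nonneg _) hE
  have key : ∀ n : ℕ,
      (1 - ε * ∑ k ∈ Finset.range n, d ^ k / (k.factorial : ℝ)) * (n.factorial : ℝ)
        ≤ d ^ n * ‖X ^ n‖ := by
    intro n
    induction n with
    | zero => simp
    | succ n ih =>
      have hrec := popa_recursion D X hX hE n
      have hF : (0 : ℝ) < (n.factorial : ℝ) := by exact_mod_cast n.factorial_pos
      have hdn : (0 : ℝ) ≤ d ^ n := pow_nonneg hd n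
      have e2 : d ^ n * (((n : ℝ) + 1) * ‖X ^ n‖ - ((n : ℝ) + 1) * ε)
          ≤ d ^ n * (d * ‖X ^ (n+1)‖) :=
        mul_le_mul_of_nonneg_left (by rw [hd_def]; linarith) hdn
      have e3 : ((n : ℝ) + 1)
            * ((1 - ε * ∑ k ∈ Finset.range n, d ^ k / (k.factorial : ℝ))
                * (n.factorial : ℝ))
          ≤ ((n : ℝ) + 1) * (d ^ n * ‖X ^ n‖) :=
        mul_le_mul_of_nonneg_left ih (by positivity)
      have hgoal_eq :
          (1 - ε * ∑ k ∈ Finset.range (n+1), d ^ k / (k.factorial : ℝ))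
              * ((n+1).factorial : ℝ)
            = ((n : ℝ) + 1)
                * ((1 - ε * ∑ k ∈ Finset.range n, d ^ k / (k.factorial : ℝ))
                    * (n.factorial : ℝ))
              - ((n : ℝ) + 1) * (ε * d ^ n) := by
        rw [Finset.sum_range_succ, Nat.factorial_succ]
        push_cast
        field_simp
        ring
      have e4 : d ^ (n+1) * ‖X ^ (n+1)‖ = d ^ n * (d * ‖X ^ (n+1)‖) := by ring
      rw [hgoal_eq, e4]
      nlinarith [e2, e3]
  by_contra hcon
  push_neg at hcon
  have hδ : 0 < 1 - ε * Real.exp d := by linarith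
  obtain ⟨n, hn⟩ :=
    ((FloorSemiring.tendsto_pow_div_factorial_atTop d).eventually_lt_const hδ).exists
  have hF : (0 : ℝ) < (n.factorial : ℝ) := by exact_mod_cast n.factorial_pos
  have hS : ∑ k ∈ Finset.range n, d ^ k / (k.factorial : ℝ) ≤ Real.exp d :=
    Real.sum_le_exp_of_nonneg hd n
  have hXn : ‖X ^ n‖ ≤ 1 := (norm_pow_le X n).trans (pow_le_one₀ (norm_nonneg X) hX)
  have h1 : (1 - ε * Real.exp d) * (n.factorial : ℝ)
      ≤ (1 - ε * ∑ k ∈ Finset.range n, d ^ k / (k.factorial : ℝ)) * (n.factorial : ℝ) := by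
    apply mul_le_mul_of_nonneg_right _ hF.le
    nlinarith
  have h2 : d ^ n * ‖X ^ n‖ ≤ d ^ n := by
    nlinarith [pow_nonneg hd n, norm_nonneg (X ^ n)]
  have h3 : d ^ n < (1 - ε * Real.exp d) * (n.factorial : ℝ) := by
    rw [div_lt_iff₀ hF] at hn
    linarith
  linarith [key n]

/-- **Popa's lower bound.** If `H` is an infinite-dimensional complex Hilbert space and
`D, X` are bounded linear operators on `H` with `‖DX - XD - 1‖ ≤ ε` for some `ε > 0`,
then `‖D‖ * ‖X‖ ≥ (1/2) * log (1/ε)`. -/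
theorem popa_lower_bound
    {H : Type*} [NormedAddCommGroup H] [InnerProductSpace ℂ H] [CompleteSpace H]
    (hH : ¬ FiniteDimensional ℂ H)
    (D X : H →L[ℂ] H) (ε : ℝ) (hε : 0 < ε)
    (h : ‖D * X - X * D - 1‖ ≤ ε) :
    ‖D‖ * ‖X‖ ≥ (1 / 2) * Real.log (1 / ε) := by
  have hnt : Nontrivial H := by
    by_contra hs
    rw [not_nontrivial_iff_subsingleton] at hs
    exact hH inferInstance
  have hDX : (0 : ℝ) ≤ ‖D‖ * ‖X‖ := by positivity
  rcases eq_or_ne X 0 with rfl | hX0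
  · have h1 : (1 : ℝ) ≤ ε := by
      simpa [norm_neg] using h
    have : Real.log (1 / ε) ≤ 0 := by
      apply Real.log_nonpos (by positivity)
      rw [div_le_one hε]; exact h1
    rw [norm_zero, mul_zero, ge_iff_le]
    linarith
  · set a : ℝ := ‖X‖ with ha_def
    have ha : 0 < a := norm_pos_iff.mpr hX0
    set D' : H →L[ℂ] H := a • D with hD'_def
    set Y : H →L[ℂ] H := a⁻¹ • X with hY_def
    have hY : ‖Y‖ ≤ 1 := by
      rw [hY_def, norm_smul, Real.norm_of_nonneg (by positivity), ← ha_def,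
        inv_mul_cancel₀ ha.ne']
    have hcomm : D' * Y - Y * D' = D * X - X * D := by
      rw [hD'_def, hY_def, smul_mul_smul_comm, smul_mul_smul_comm,
        mul_inv_cancel₀ ha.ne', inv_mul_cancel₀ ha.ne', one_smul, one_smul]
    have hE : ‖D' * Y - Y * D' - 1‖ ≤ ε := by rw [hcomm]; exact h
    have hkey := popa_key D' Y hY hE
    have hD' : ‖D'‖ = a * ‖D‖ := by
      rw [hD'_def, norm_smul, Real.norm_of_nonneg ha.le]
    rw [hD'] at hkey
    have hlog : Real.log (1 / ε) ≤ 2 * (a * ‖D‖) := by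
      rw [Real.log_le_iff_le_exp (by positivity), div_le_iff₀ hε]
      linarith [hkey]
    rw [ge_iff_le]
    linarith [hlog]
end

section
/- Let A be a unital C*-algebra containing elements u, v with u*u = v*v = uu* + vv* = 1 and u*v = v*u = 0, and let n ∈ ℕ, n ≥ 1. Then the map φ : Mₙ(A) → M₂ₙ(A) sending a matrix X to the 2×2 block matrix [[u*Xu, u*Xv],[v*Xu, v*Xv]], where for a,b ∈ A and X = (x_{ij}) the symbol aXb denotes the matrix (a·x_{ij}·b), is a bijective isometric *-isomorphism of C*-algebras, with inverse ψ([[A',B],[C,D]]) = uA'u* + uBv* + vCu* + vDv*. In particular, the C*-algebras A, M₂(A), M₄(A), …, M_{2^k}(A), … are pairwise isometrically *-isomorphic. -/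
/-- The norm of a vector in the standard Hilbert C*-module `Aⁿ`. -/
noncomputable def cstarVecNorm {A : Type*} [CStarAlgebra A] {ι : Type*} [Fintype ι]
    (w : ι → A) : ℝ :=
  Real.sqrt ‖∑ i, star (w i) * w i‖

/-- The canonical C*-norm on matrices over a unital C*-algebra `A`: the operator norm of
the action of a matrix on the standard Hilbert C*-module. -/
noncomputable def cstarMatrixNorm {A : Type*} [CStarAlgebra A] {ι : Type*} [Fintype ι]
    (M : Matrix ι ι A) : ℝ :=
  ⨆ w : {w : ι → A // cstarVecNorm w ≤ 1}, cstarVecNorm (M.mulVec w)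

/-!
The pair `(u, v)` assembles into the `n × 2n` matrix `W = [u • 1, v • 1]`, and the Cuntz relations
say exactly that `W` is unitary: `W Wᴴ = uu* + vv* = 1` and `Wᴴ W = [[u*u, u*v], [v*u, v*v]] = 1`.
The block map is `X ↦ Wᴴ X W`, hence a *-isomorphism with inverse `Y ↦ W Y Wᴴ`. It is isometric
because `W` and `Wᴴ` act isometrically on the Hilbert modules `Aⁿ` and `A²ⁿ`:
`⟨Ww, Ww⟩ = ⟨w, WᴴWw⟩ = ⟨w, w⟩`. Starting from `A ≅ M₁(A)` and doubling `k` times gives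
`M_{2^k}(A)`.
-/

open Matrix

namespace Matrix

variable {R A m n : Type*} [CommSemiring R] [Semiring A] [StarRing A] [Algebra R A]
  [Fintype m] [DecidableEq m] [Fintype n] [DecidableEq n]

def conjStarAlgEquiv (W : Matrix m n A) (hW : W * Wᴴ = 1) (hW' : Wᴴ * W = 1) :
    Matrix m m A ≃⋆ₐ[R] Matrix n n A where
  toFun X := Wᴴ * X * W
  invFun Y := W * Y * Wᴴ
  left_inv X := by
    simp only [Matrix.mul_assoc, hW, Matrix.mul_one]
    rw [← Matrix.mul_assoc, hW, Matrix.one_mul]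
  right_inv Y := by
    simp only [Matrix.mul_assoc, hW', Matrix.mul_one]
    rw [← Matrix.mul_assoc, hW', Matrix.one_mul]
  map_mul' X Y := by
    simp only [Matrix.mul_assoc]
    rw [← Matrix.mul_assoc W, hW, Matrix.one_mul]
  map_add' X Y := by simp only [Matrix.mul_add, Matrix.add_mul]
  map_smul' r X := by simp only [Matrix.mul_smul, Matrix.smul_mul]
  map_star' X := by
    simp only [star_eq_conjTranspose, conjTranspose_mul, conjTranspose_conjTranspose,
      Matrix.mul_assoc]

def reindexStarAlgEquiv (e : m ≃ n) : Matrix m m A ≃⋆ₐ[R] Matrix n n A :=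
  .ofAlgEquiv (reindexAlgEquiv R A e) fun M => by
    simp [star_eq_conjTranspose]

@[simp] lemma reindexStarAlgEquiv_apply (e : m ≃ n) (M : Matrix m m A) :
    reindexStarAlgEquiv (R := R) e M = reindex e e M := rfl

def uniqueStarAlgEquiv [Unique m] : A ≃⋆ₐ[R] Matrix m m A where
  toFun a := of fun _ _ => a
  invFun M := M default default
  left_inv _ := rfl
  right_inv M := by ext i j; simp [Subsingleton.elim i default, Subsingleton.elim j default]
  map_mul' a b := by ext; simp [mul_apply]
  map_add' a b := by ext; simp
  map_smul' r a := by ext; simp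
  map_star' a := by ext; simp [star_apply]

end Matrix

def Matrix.cuntzRow (ι : Type*) {A : Type*} [DecidableEq ι] [Zero A] (u v : A) :
    Matrix ι (ι ⊕ ι) A :=
  fromCols (diagonal fun _ => u) (diagonal fun _ => v)

section Cuntz

variable {R A ι : Type*} [CommSemiring R] [Semiring A] [StarRing A] [Algebra R A] [Fintype ι]
  [DecidableEq ι] {u v : A}

lemma cuntzRow_mul_conjTranspose (hsum : u * star u + v * star v = 1) :
    cuntzRow ι u v * (cuntzRow ι u v)ᴴ = 1 := by
  rw [cuntzRow, conjTranspose_fromCols_eq_fromRows_conjTranspose, fromCols_mul_fromRows]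
  simp [diagonal_conjTranspose, diagonal_mul_diagonal, diagonal_add, hsum]

lemma conjTranspose_cuntzRow_mul (huu : star u * u = 1) (hvv : star v * v = 1)
    (huv : star u * v = 0) (hvu : star v * u = 0) :
    (cuntzRow ι u v)ᴴ * cuntzRow ι u v = 1 := by
  rw [cuntzRow, conjTranspose_fromCols_eq_fromRows_conjTranspose, fromRows_mul_fromCols]
  simp [diagonal_conjTranspose, diagonal_mul_diagonal, huu, hvv, huv, hvu]

variable (huu : star u * u = 1) (hvv : star v * v = 1) (hsum : u * star u + v * star v = 1)
  (huv : star u * v = 0) (hvu : star v * u = 0)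

noncomputable def cuntzDoubling : Matrix ι ι A ≃⋆ₐ[R] Matrix (ι ⊕ ι) (ι ⊕ ι) A :=
  conjStarAlgEquiv (cuntzRow ι u v) (cuntzRow_mul_conjTranspose hsum)
    (conjTranspose_cuntzRow_mul huu hvv huv hvu)

lemma cuntzDoubling_apply (X : Matrix ι ι A) :
    cuntzDoubling (R := R) huu hvv hsum huv hvu X =
      fromBlocks (of fun i j => star u * X i j * u) (of fun i j => star u * X i j * v)
        (of fun i j => star v * X i j * u) (of fun i j => star v * X i j * v) := by
  change (cuntzRow ι u v)ᴴ * X * cuntzRow ι u v = _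
  rw [cuntzRow, conjTranspose_fromCols_eq_fromRows_conjTranspose, fromRows_mul,
    fromRows_mul_fromCols]
  congr 1 <;> ext i j <;> simp [diagonal_conjTranspose, diagonal_mul, mul_diagonal]

lemma cuntzDoubling_symm_apply_apply (Y : Matrix (ι ⊕ ι) (ι ⊕ ι) A) (i j : ι) :
    (cuntzDoubling (R := R) huu hvv hsum huv hvu).symm Y i j =
      u * Y (.inl i) (.inl j) * star u + u * Y (.inl i) (.inr j) * star v
        + v * Y (.inr i) (.inl j) * star u + v * Y (.inr i) (.inr j) * star v := by
  change (cuntzRow ι u v * Y * (cuntzRow ι u v)ᴴ) i j = _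
  rw [cuntzRow, conjTranspose_fromCols_eq_fromRows_conjTranspose, ← fromBlocks_toBlocks Y,
    fromCols_mul_fromBlocks, fromCols_mul_fromRows]
  simp [diagonal_conjTranspose, toBlocks₁₁, toBlocks₁₂, toBlocks₂₁, toBlocks₂₂, add_mul]
  abel

end Cuntz

section Norm

variable {A m n : Type*} [CStarAlgebra A] [Fintype m] [Fintype n]

lemma cstarVecNorm_mulVec_of_conjTranspose_mul_self [DecidableEq n] {W : Matrix m n A}
    (hW : Wᴴ * W = 1) (w : n → A) : cstarVecNorm (W *ᵥ w) = cstarVecNorm w := by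
  change √‖star (W *ᵥ w) ⬝ᵥ (W *ᵥ w)‖ = √‖star w ⬝ᵥ w‖
  rw [star_mulVec, ← dotProduct_mulVec, mulVec_mulVec, hW, one_mulVec]

lemma cstarMatrixNorm_eq_of_equiv {M : Matrix m m A} {N : Matrix n n A} (T : (n → A) ≃ (m → A))
    (hT : ∀ w, cstarVecNorm (T w) = cstarVecNorm w)
    (hMN : ∀ w, cstarVecNorm (N *ᵥ w) = cstarVecNorm (M *ᵥ T w)) :
    cstarMatrixNorm N = cstarMatrixNorm M :=
  (T.subtypeEquiv fun w => by rw [hT]).iSup_congr fun w => (hMN w).symm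

lemma cstarMatrixNorm_conjTranspose_mul_mul [DecidableEq m] [DecidableEq n] {W : Matrix m n A}
    (hW : W * Wᴴ = 1) (hW' : Wᴴ * W = 1) (X : Matrix m m A) :
    cstarMatrixNorm (Wᴴ * X * W) = cstarMatrixNorm X := by
  let T : (n → A) ≃ (m → A) :=
    ⟨(W *ᵥ ·), (Wᴴ *ᵥ ·), fun w => by simp [mulVec_mulVec, hW'],
      fun w => by simp [mulVec_mulVec, hW]⟩
  refine cstarMatrixNorm_eq_of_equiv T (cstarVecNorm_mulVec_of_conjTranspose_mul_self hW')
    fun w => ?_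
  rw [← mulVec_mulVec, ← mulVec_mulVec]
  exact cstarVecNorm_mulVec_of_conjTranspose_mul_self (by rwa [conjTranspose_conjTranspose]) _

lemma cstarMatrixNorm_reindex [DecidableEq m] [DecidableEq n] (e : m ≃ n) (X : Matrix m m A) :
    cstarMatrixNorm (reindex e e X) = cstarMatrixNorm X := by
  set P : Matrix m n A := (1 : Matrix m m A).submatrix id e.symm
  have hP : P * Pᴴ = 1 := by
    rw [conjTranspose_submatrix, conjTranspose_one, submatrix_mul_equiv, Matrix.one_mul,
      submatrix_id_id]
  have hP' : Pᴴ * P = 1 := by ext i j; simp [P, conjTranspose_submatrix, mul_apply, one_apply]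
  have hX : reindex e e X = Pᴴ * X * P := by
    ext i j; simp [P, conjTranspose_submatrix, mul_apply, one_apply]
  rw [hX, cstarMatrixNorm_conjTranspose_mul_mul hP hP']

lemma cstarVecNorm_of_unique [Unique m] (w : m → A) : cstarVecNorm w = ‖w default‖ := by
  simp [cstarVecNorm, CStarRing.norm_star_mul_self]

lemma cstarMatrixNorm_of_unique [Unique m] (a : A) :
    cstarMatrixNorm (of fun _ _ : m => a) = ‖a‖ := by
  have hmul (w : m → A) : cstarVecNorm (of (fun _ _ : m => a) *ᵥ w) = ‖a * w default‖ := by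
    simp [cstarVecNorm_of_unique, mulVec, dotProduct]
  have hle (w : {w : m → A // cstarVecNorm w ≤ 1}) :
      cstarVecNorm (of (fun _ _ : m => a) *ᵥ w.1) ≤ ‖a‖ := by
    have hw := w.2
    rw [cstarVecNorm_of_unique] at hw
    rw [hmul]
    exact (norm_mul_le _ _).trans (mul_le_of_le_one_right (norm_nonneg a) hw)
  have hone : ‖(1 : A)‖ ≤ 1 := by
    rcases subsingleton_or_nontrivial A with h | h
    · simp [Subsingleton.elim (1 : A) 0]
    · simp
  have : Nonempty {w : m → A // cstarVecNorm w ≤ 1} := ⟨⟨0, by simp [cstarVecNorm_of_unique]⟩⟩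
  refine le_antisymm (ciSup_le hle) ?_
  refine le_ciSup_of_le ⟨‖a‖, Set.forall_mem_range.mpr hle⟩
    ⟨fun _ => 1, by rwa [cstarVecNorm_of_unique]⟩ ?_
  rw [hmul, mul_one]

end Norm

lemma cstarMatrixNorm_cuntzDoubling {A ι : Type*} [CStarAlgebra A] [Fintype ι] [DecidableEq ι]
    {u v : A} (huu : star u * u = 1) (hvv : star v * v = 1) (hsum : u * star u + v * star v = 1)
    (huv : star u * v = 0) (hvu : star v * u = 0) (X : Matrix ι ι A) :
    cstarMatrixNorm (cuntzDoubling (R := ℂ) huu hvv hsum huv hvu X) = cstarMatrixNorm X :=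
  cstarMatrixNorm_conjTranspose_mul_mul (cuntzRow_mul_conjTranspose hsum)
    (conjTranspose_cuntzRow_mul huu hvv huv hvu) X

theorem exists_isometric_starAlgEquiv_matrix_two_pow {A : Type*} [CStarAlgebra A] {u v : A}
    (huu : star u * u = 1) (hvv : star v * v = 1) (hsum : u * star u + v * star v = 1)
    (huv : star u * v = 0) (hvu : star v * u = 0) (k : ℕ) :
    ∃ f : A ≃⋆ₐ[ℂ] Matrix (Fin (2 ^ k)) (Fin (2 ^ k)) A, ∀ x, cstarMatrixNorm (f x) = ‖x‖ := by
  induction k with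
  | zero =>
    have : Unique (Fin (2 ^ 0)) := inferInstanceAs (Unique (Fin 1))
    exact ⟨uniqueStarAlgEquiv, cstarMatrixNorm_of_unique⟩
  | succ k ih =>
    obtain ⟨f, hf⟩ := ih
    let σ : Fin (2 ^ k) ⊕ Fin (2 ^ k) ≃ Fin (2 ^ (k + 1)) :=
      finSumFinEquiv.trans (finCongr (by ring))
    refine ⟨f.trans ((cuntzDoubling huu hvv hsum huv hvu).trans (reindexStarAlgEquiv σ)),
      fun x => ?_⟩
    rw [StarAlgEquiv.trans_apply, StarAlgEquiv.trans_apply, reindexStarAlgEquiv_apply,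
      cstarMatrixNorm_reindex, cstarMatrixNorm_cuntzDoubling, hf]

theorem matrix_algebra_iso_double_general {A : Type*} [CStarAlgebra A] (u v : A)
    (huu : star u * u = 1) (hvv : star v * v = 1) (hsum : u * star u + v * star v = 1)
    (huv : star u * v = 0) (hvu : star v * u = 0) {n : ℕ} :
    (∃ e : Matrix (Fin n) (Fin n) A ≃⋆ₐ[ℂ]
        Matrix (Fin n ⊕ Fin n) (Fin n ⊕ Fin n) A,
      (∀ (X : Matrix (Fin n) (Fin n) A) (i j : Fin n),
        e X (Sum.inl i) (Sum.inl j) = star u * X i j * u ∧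
        e X (Sum.inl i) (Sum.inr j) = star u * X i j * v ∧
        e X (Sum.inr i) (Sum.inl j) = star v * X i j * u ∧
        e X (Sum.inr i) (Sum.inr j) = star v * X i j * v) ∧
      (∀ X : Matrix (Fin n) (Fin n) A, cstarMatrixNorm (e X) = cstarMatrixNorm X) ∧
      (∀ (Y : Matrix (Fin n ⊕ Fin n) (Fin n ⊕ Fin n) A) (i j : Fin n),
        e.symm Y i j =
          u * Y (Sum.inl i) (Sum.inl j) * star u + u * Y (Sum.inl i) (Sum.inr j) * star v
            + v * Y (Sum.inr i) (Sum.inl j) * star u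
            + v * Y (Sum.inr i) (Sum.inr j) * star v)) ∧
    (∀ k : ℕ, ∃ f : A ≃⋆ₐ[ℂ] Matrix (Fin (2 ^ k)) (Fin (2 ^ k)) A,
      ∀ x : A, cstarMatrixNorm (f x) = ‖x‖) := by
  refine ⟨⟨cuntzDoubling huu hvv hsum huv hvu, fun X i j => ?_,
    cstarMatrixNorm_cuntzDoubling huu hvv hsum huv hvu,
    cuntzDoubling_symm_apply_apply huu hvv hsum huv hvu⟩,
    exists_isometric_starAlgEquiv_matrix_two_pow huu hvv hsum huv hvu⟩
  simp [cuntzDoubling_apply]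

/-- Theorem 2.6.  If a unital C*-algebra `A` contains isometries `u, v` with
`u*u = v*v = uu* + vv* = 1` and `u*v = v*u = 0`, then for every `n ≥ 1` the block map
`X ↦ [[u*Xu, u*Xv], [v*Xu, v*Xv]]` (acting entrywise) is a bijective isometric
*-isomorphism `Mₙ(A) ≃ M₂ₙ(A)` (the `2n × 2n` matrices being indexed by `Fin n ⊕ Fin n`),
with inverse `[[A',B],[C,D]] ↦ uA'u* + uBv* + vCu* + vDv*`.  In particular, the
C*-algebras `A, M₂(A), M₄(A), …, M_{2^k}(A), …` are pairwise isometrically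
*-isomorphic. -/
theorem matrix_algebra_iso_double {A : Type*} [CStarAlgebra A] (u v : A)
    (huu : star u * u = 1) (hvv : star v * v = 1) (hsum : u * star u + v * star v = 1)
    (huv : star u * v = 0) (hvu : star v * u = 0) {n : ℕ} (hn : 1 ≤ n) :
    (∃ e : Matrix (Fin n) (Fin n) A ≃⋆ₐ[ℂ]
        Matrix (Fin n ⊕ Fin n) (Fin n ⊕ Fin n) A,
      (∀ (X : Matrix (Fin n) (Fin n) A) (i j : Fin n),
        e X (Sum.inl i) (Sum.inl j) = star u * X i j * u ∧
        e X (Sum.inl i) (Sum.inr j) = star u * X i j * v ∧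
        e X (Sum.inr i) (Sum.inl j) = star v * X i j * u ∧
        e X (Sum.inr i) (Sum.inr j) = star v * X i j * v) ∧
      (∀ X : Matrix (Fin n) (Fin n) A, cstarMatrixNorm (e X) = cstarMatrixNorm X) ∧
      (∀ (Y : Matrix (Fin n ⊕ Fin n) (Fin n ⊕ Fin n) A) (i j : Fin n),
        e.symm Y i j =
          u * Y (Sum.inl i) (Sum.inl j) * star u + u * Y (Sum.inl i) (Sum.inr j) * star v
            + v * Y (Sum.inr i) (Sum.inl j) * star u
            + v * Y (Sum.inr i) (Sum.inr j) * star v)) ∧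
    (∀ k : ℕ, ∃ f : A ≃⋆ₐ[ℂ] Matrix (Fin (2 ^ k)) (Fin (2 ^ k)) A,
      ∀ x : A, cstarMatrixNorm (f x) = ‖x‖) :=
  matrix_algebra_iso_double_general u v huu hvv hsum huv hvu
end

section
/- Let A be a unital C*-algebra containing elements u, v with u*u = v*v = uu* + vv* = 1 and u*v = v*u = 0, let n ≥ 2, and let T : Aⁿ → A^{n−1} be the bounded linear operator T(b₁,…,bₙ) = ([v,b_i] + [u,b_{i−1}])_{i=2}^{n}, where Aⁿ and A^{n−1} carry the supremum norm. Then there exists a bounded linear operator R : A^{n−1} → Aⁿ with T ∘ R = id and ‖R c‖ ≤ 8√2·n²·‖c‖ for all c ∈ A^{n−1}. -/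
/-!
Lifting `z ∈ Aᴺ` (`N = n - 1`) to `b_j = -(z_j u* + z_{j-1} v*)`, with `z_{-1} = z_N = 0`, gives
`T b = 2z - Φ z` where `Φ(z)_i = u z_i u* + u z_{i-1} v* + v z_{i+1} u* + v z_i v*`. Since `u`
and `v` are isometries with orthogonal ranges, the C*-identity gives
`‖Φ(z)_i‖² ≤ 2‖z_i‖² + ‖z_{i-1}‖² + ‖z_{i+1}‖²`. That alone only bounds `Φ` by `2`, but after
conjugating by diagonal weights `w_i = √g(i)`, where `g` is a concave parabola with values in
`[1, 2]` on `[-1, N]` and constant second difference `-8/(N+1)²`, the operator `(2w)⁻¹ Φ w` is a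
contraction with constant `1 - 1/(2(N+1)²)`. A Neumann series inverts `2 - Φ`, and the resulting
right inverse of `T` has norm at most `2(N+1)² = 2n²`.
-/

open ContinuousLinearMap

noncomputable section

section Isometries

variable {A : Type*} [NormedRing A] [StarRing A] [CStarRing A] {u v : A}

structure OrthogonalIsometries (u v : A) : Prop where
  star_mul_self_left : star u * u = 1
  star_mul_self_right : star v * v = 1
  star_left_mul_right : star u * v = 0
  star_right_mul_left : star v * u = 0

lemma norm_mul_add_mul_sq_le (h : OrthogonalIsometries u v) (a b : A) :
    ‖u * a + v * b‖ ^ 2 ≤ ‖a‖ ^ 2 + ‖b‖ ^ 2 := by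
  have hstar : star (u * a + v * b) * (u * a + v * b) = star a * a + star b * b :=
    calc star (u * a + v * b) * (u * a + v * b)
        = star a * (star u * u) * a + star a * (star u * v) * b
          + star b * (star v * u) * a + star b * (star v * v) * b := by
          simp only [star_add, star_mul]; noncomm_ring
      _ = star a * a + star b * b := by simp [h.star_mul_self_left, h.star_mul_self_right,
            h.star_left_mul_right, h.star_right_mul_left]
  calc ‖u * a + v * b‖ ^ 2 = ‖star a * a + star b * b‖ := by
        rw [sq, ← CStarRing.norm_star_mul_self, hstar]
    _ ≤ ‖star a * a‖ + ‖star b * b‖ := norm_add_le _ _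
    _ = ‖a‖ ^ 2 + ‖b‖ ^ 2 := by simp only [CStarRing.norm_star_mul_self, sq]

lemma norm_mul_star_add_mul_star_sq_le (h : OrthogonalIsometries u v) (x y : A) :
    ‖x * star u + y * star v‖ ^ 2 ≤ ‖x‖ ^ 2 + ‖y‖ ^ 2 := by
  rw [← norm_star]
  simpa [star_add, star_mul] using norm_mul_add_mul_sq_le h (star x) (star y)

/-- The left side is the image of the matrix `[[a, b], [c, d]]` under the embedding `M₂(A) → A`
given by `u` and `v`. -/
lemma norm_block_sq_le (h : OrthogonalIsometries u v) (a b c d : A) :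
    ‖u * a * star u + u * b * star v + v * c * star u + v * d * star v‖ ^ 2
      ≤ ‖a‖ ^ 2 + ‖b‖ ^ 2 + ‖c‖ ^ 2 + ‖d‖ ^ 2 := by
  have hsplit : u * a * star u + u * b * star v + v * c * star u + v * d * star v
      = (u * a + v * c) * star u + (u * b + v * d) * star v := by noncomm_ring
  rw [hsplit]
  linarith [norm_mul_star_add_mul_star_sq_le h (u * a + v * c) (u * b + v * d),
    norm_mul_add_mul_sq_le h a c, norm_mul_add_mul_sq_le h b d]

end Isometries

section Padding

variable {R M : Type*} [Semiring R] [TopologicalSpace M] [AddCommMonoid M] [Module R M] {N : ℕ}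

variable (R) in
def padLeft : (Fin N → M) →L[R] (Fin (N + 1) → M) :=
  ContinuousLinearMap.pi (Fin.cons 0 ContinuousLinearMap.proj)

variable (R) in
def padRight : (Fin N → M) →L[R] (Fin (N + 1) → M) :=
  ContinuousLinearMap.pi (Fin.snoc ContinuousLinearMap.proj 0)

@[simp] lemma padLeft_zero (z : Fin N → M) : padLeft R z 0 = 0 := rfl
@[simp] lemma padLeft_succ (z : Fin N → M) (i : Fin N) : padLeft R z i.succ = z i := by
  simp [padLeft]
@[simp] lemma padRight_last (z : Fin N → M) : padRight R z (Fin.last N) = 0 := by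
  simp [padRight]
@[simp] lemma padRight_castSucc (z : Fin N → M) (i : Fin N) :
    padRight R z i.castSucc = z i := by
  simp [padRight]

end Padding

section Diagonal

variable {ι E : Type*} [NormedAddCommGroup E] [NormedSpace ℂ E]

def diagonalSMul (s : ι → ℝ) : (ι → E) →L[ℂ] (ι → E) :=
  ContinuousLinearMap.pi fun i => s i • ContinuousLinearMap.proj i

@[simp] lemma diagonalSMul_apply (s : ι → ℝ) (y : ι → E) (i : ι) :
    diagonalSMul s y i = s i • y i := rfl

lemma norm_diagonalSMul_le [Fintype ι] {s : ι → ℝ} {C : ℝ} (hC : 0 ≤ C)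
    (hs : ∀ i, |s i| ≤ C) (y : ι → E) : ‖diagonalSMul s y‖ ≤ C * ‖y‖ :=
  (pi_norm_le_iff_of_nonneg (by positivity)).2 fun i => by
    rw [diagonalSMul_apply, norm_smul, Real.norm_eq_abs]
    exact mul_le_mul (hs i) (norm_le_pi_norm y i) (norm_nonneg _) hC

end Diagonal

section Weight

def weightSq (N : ℕ) (x : ℝ) : ℝ := 2 - ((2 * x - N + 1) / (N + 1)) ^ 2

variable {N : ℕ} {x : ℝ}

lemma weightSq_le_two : weightSq N x ≤ 2 := by
  unfold weightSq; linarith [sq_nonneg ((2 * x - N + 1) / (N + 1))]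

lemma one_le_weightSq (h₁ : -1 ≤ x) (h₂ : x ≤ N) : 1 ≤ weightSq N x := by
  have : ((2 * x - N + 1) / (N + 1)) ^ 2 ≤ 1 := by
    rw [div_pow, div_le_one (by positivity)]
    nlinarith
  unfold weightSq; linarith

lemma weightSq_sub_one_add_weightSq_add_one_le :
    weightSq N (x - 1) + weightSq N (x + 1) ≤ (2 - 4 / (N + 1) ^ 2) * weightSq N x := by
  have second_difference :
      weightSq N (x - 1) + weightSq N (x + 1) = 2 * weightSq N x - 8 / (N + 1) ^ 2 := by
    unfold weightSq; field_simp; ring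
  have : 4 / (N + 1) ^ 2 * weightSq N x ≤ 8 / (N + 1) ^ 2 := by
    rw [div_mul_eq_mul_div, div_le_div_iff_of_pos_right (by positivity)]
    linarith [weightSq_le_two (N := N) (x := x)]
  linarith

lemma one_le_weightSq_coe (i : Fin N) : 1 ≤ weightSq N i :=
  one_le_weightSq (by linarith [Nat.cast_nonneg (α := ℝ) i]) (by exact_mod_cast i.is_lt.le)

def weight (N : ℕ) (i : Fin N) : ℝ := √(weightSq N i)

lemma weight_sq (i : Fin N) : weight N i ^ 2 = weightSq N i :=
  Real.sq_sqrt (by linarith [one_le_weightSq_coe i])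

lemma one_le_weight (i : Fin N) : 1 ≤ weight N i :=
  Real.one_le_sqrt.2 (one_le_weightSq_coe i)

end Weight

lemma exists_rightInverse_one_sub {𝕜 E : Type*} [NontriviallyNormedField 𝕜] [NormedAddCommGroup E]
    [NormedSpace 𝕜 E] [CompleteSpace E] (K : E →L[𝕜] E) {θ : ℝ} (hθ : θ < 1)
    (hK : ∀ x, ‖K x‖ ≤ θ * ‖x‖) :
    ∃ S : E →L[𝕜] E, (∀ x, S x - K (S x) = x) ∧ ∀ x, (1 - θ) * ‖S x‖ ≤ ‖x‖ := by
  have hK_lt_one : ‖K‖ < 1 := by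
    refine (K.opNorm_le_bound (le_max_right θ 0) fun x => ?_).trans_lt (max_lt hθ one_pos)
    exact (hK x).trans (mul_le_mul_of_nonneg_right (le_max_left θ 0) (norm_nonneg x))
  set S : E →L[𝕜] E := ↑(Units.oneSub K hK_lt_one)⁻¹
  have hS : ∀ x, S x - K (S x) = x := fun x => by
    simpa using congr($((Units.oneSub K hK_lt_one).mul_inv) x)
  refine ⟨S, hS, fun x => ?_⟩
  have := norm_sub_norm_le (S x) (K (S x))
  rw [hS] at this
  linarith [hK (S x)]

namespace CuntzCommutator

variable {A : Type*} [CStarAlgebra A] {u v : A} {N : ℕ}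

def commutatorMap (u v : A) (b : Fin (N + 1) → A) (i : Fin N) : A :=
  (v * b i.succ - b i.succ * v) + (u * b i.castSucc - b i.castSucc * u)

def liftMap (u v : A) : (Fin N → A) →L[ℂ] (Fin (N + 1) → A) where
  toFun z j := -(padRight ℂ z j * star u + padLeft ℂ z j * star v)
  map_add' x y := by ext j; simp only [map_add, Pi.add_apply, add_mul]; abel
  map_smul' c x := by ext j; simp
  cont := by fun_prop

/-- `padLeft ℂ z i.castSucc` and `padRight ℂ z i.succ` are the neighbours `z_{i-1}` and `z_{i+1}`
of `z_i`, read as `0` at the two ends. -/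
def couplingMap (u v : A) : (Fin N → A) →L[ℂ] (Fin N → A) where
  toFun z i := u * z i * star u + u * padLeft ℂ z i.castSucc * star v
    + v * padRight ℂ z i.succ * star u + v * z i * star v
  map_add' x y := by ext i; simp only [map_add, Pi.add_apply, add_mul, mul_add]; abel
  map_smul' c x := by ext i; simp
  cont := by fun_prop

@[simp] lemma liftMap_apply (z : Fin N → A) (j : Fin (N + 1)) :
    liftMap u v z j = -(padRight ℂ z j * star u + padLeft ℂ z j * star v) := rfl

@[simp] lemma couplingMap_apply (z : Fin N → A) (i : Fin N) :
    couplingMap u v z i = u * z i * star u + u * padLeft ℂ z i.castSucc * star v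
      + v * padRight ℂ z i.succ * star u + v * z i * star v := rfl

lemma commutatorMap_liftMap (h : OrthogonalIsometries u v) (z : Fin N → A) (i : Fin N) :
    commutatorMap u v (liftMap u v z) i = 2 • z i - couplingMap u v z i := by
  simp only [commutatorMap, liftMap_apply, couplingMap_apply, padLeft_succ, padRight_castSucc,
    mul_neg, neg_mul, mul_add, add_mul, mul_assoc, h.star_mul_self_left, h.star_mul_self_right,
    h.star_left_mul_right, h.star_right_mul_left, mul_one, mul_zero]
  abel

lemma norm_liftMap_sq_le (h : OrthogonalIsometries u v) (z : Fin N → A) (j : Fin (N + 1)) :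
    ‖liftMap u v z j‖ ^ 2 ≤ ‖padRight ℂ z j‖ ^ 2 + ‖padLeft ℂ z j‖ ^ 2 := by
  rw [liftMap_apply, norm_neg]
  exact norm_mul_star_add_mul_star_sq_le h _ _

lemma norm_couplingMap_sq_le (h : OrthogonalIsometries u v) (z : Fin N → A) (i : Fin N) :
    ‖couplingMap u v z i‖ ^ 2
      ≤ 2 * ‖z i‖ ^ 2 + ‖padLeft ℂ z i.castSucc‖ ^ 2 + ‖padRight ℂ z i.succ‖ ^ 2 := by
  rw [couplingMap_apply]
  linarith [norm_block_sq_le h (z i) (padLeft ℂ z i.castSucc) (padRight ℂ z i.succ) (z i)]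

lemma norm_diagonalSMul_weight_sq_le (y : Fin N → A) (i : Fin N) :
    ‖diagonalSMul (weight N) y i‖ ^ 2 ≤ weightSq N i * ‖y‖ ^ 2 := by
  rw [diagonalSMul_apply, norm_smul, mul_pow, Real.norm_eq_abs, sq_abs, weight_sq]
  gcongr
  · linarith [one_le_weightSq_coe i]
  · exact norm_le_pi_norm y i

lemma norm_padLeft_weighted_sq_le (y : Fin N → A) (j : Fin (N + 1)) :
    ‖padLeft ℂ (diagonalSMul (weight N) y) j‖ ^ 2 ≤ weightSq N ((j : ℝ) - 1) * ‖y‖ ^ 2 := by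
  cases j using Fin.cases with
  | zero =>
    have hg : 1 ≤ weightSq N (-1) :=
      one_le_weightSq le_rfl (by linarith [Nat.cast_nonneg (α := ℝ) N])
    simpa using mul_nonneg (zero_le_one.trans hg) (sq_nonneg ‖y‖)
  | succ i => simpa using norm_diagonalSMul_weight_sq_le y i

lemma norm_padRight_weighted_sq_le (y : Fin N → A) (j : Fin (N + 1)) :
    ‖padRight ℂ (diagonalSMul (weight N) y) j‖ ^ 2 ≤ weightSq N j * ‖y‖ ^ 2 := by
  cases j using Fin.lastCases with
  | last =>
    have hg : 1 ≤ weightSq N N := one_le_weightSq (by linarith [Nat.cast_nonneg (α := ℝ) N]) le_rfl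
    simpa using mul_nonneg (zero_le_one.trans hg) (sq_nonneg ‖y‖)
  | cast i => simpa using norm_diagonalSMul_weight_sq_le y i

def weightedLift (u v : A) : (Fin N → A) →L[ℂ] (Fin (N + 1) → A) :=
  liftMap u v ∘L diagonalSMul (weight N)

def contraction (u v : A) : (Fin N → A) →L[ℂ] (Fin N → A) :=
  diagonalSMul (fun i => (2 * weight N i)⁻¹) ∘L couplingMap u v ∘L diagonalSMul (weight N)

lemma commutatorMap_weightedLift (h : OrthogonalIsometries u v) (y : Fin N → A) (i : Fin N) :
    commutatorMap u v (weightedLift u v y) i = (2 * weight N i) • (y - contraction u v y) i := by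
  have hw : 2 * weight N i ≠ 0 := by linarith [one_le_weight i]
  rw [weightedLift, comp_apply, commutatorMap_liftMap h, contraction]
  simp only [comp_apply, diagonalSMul_apply, Pi.sub_apply, smul_sub, smul_smul,
    mul_inv_cancel₀ hw, one_smul, mul_smul, ofNat_smul_eq_nsmul]

lemma norm_weightedLift_le (h : OrthogonalIsometries u v) (y : Fin N → A) :
    ‖weightedLift u v y‖ ≤ 2 * ‖y‖ := by
  refine (pi_norm_le_iff_of_nonneg (by positivity)).2 fun j => ?_
  refine (pow_le_pow_iff_left₀ (norm_nonneg _) (by positivity) two_ne_zero).1 ?_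
  calc ‖weightedLift u v y j‖ ^ 2
      ≤ ‖padRight ℂ (diagonalSMul (weight N) y) j‖ ^ 2
        + ‖padLeft ℂ (diagonalSMul (weight N) y) j‖ ^ 2 := norm_liftMap_sq_le h _ j
    _ ≤ weightSq N j * ‖y‖ ^ 2 + weightSq N ((j : ℝ) - 1) * ‖y‖ ^ 2 :=
        add_le_add (norm_padRight_weighted_sq_le y j) (norm_padLeft_weighted_sq_le y j)
    _ ≤ (2 * ‖y‖) ^ 2 := by
        nlinarith [weightSq_le_two (N := N) (x := j), weightSq_le_two (N := N) (x := j - 1),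
          sq_nonneg ‖y‖]

lemma norm_contraction_le (h : OrthogonalIsometries u v) (y : Fin N → A) :
    ‖contraction u v y‖ ≤ (1 - 1 / (2 * (N + 1) ^ 2)) * ‖y‖ := by
  have hN : (1 : ℝ) ≤ (N + 1) ^ 2 := one_le_pow₀ (by linarith [Nat.cast_nonneg (α := ℝ) N])
  have hθ : 0 ≤ 1 - 1 / (2 * ((N : ℝ) + 1) ^ 2) := by
    rw [sub_nonneg, div_le_one (by positivity)]; linarith
  refine (pi_norm_le_iff_of_nonneg (mul_nonneg hθ (norm_nonneg y))).2 fun i => ?_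
  refine (pow_le_pow_iff_left₀ (norm_nonneg _) (by positivity) two_ne_zero).1 ?_
  set z := diagonalSMul (weight N) y
  have hg : 1 ≤ weightSq N i := one_le_weightSq_coe i
  have hcoupling :
      ‖couplingMap u v z i‖ ^ 2 ≤ (4 - 4 / (N + 1) ^ 2) * weightSq N i * ‖y‖ ^ 2 :=
    calc ‖couplingMap u v z i‖ ^ 2
        ≤ 2 * ‖z i‖ ^ 2 + ‖padLeft ℂ z i.castSucc‖ ^ 2 + ‖padRight ℂ z i.succ‖ ^ 2 :=
          norm_couplingMap_sq_le h z i
      _ ≤ (2 * weightSq N i + weightSq N (i - 1) + weightSq N (i + 1)) * ‖y‖ ^ 2 := by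
          have h₁ := norm_diagonalSMul_weight_sq_le y i
          have h₂ := norm_padLeft_weighted_sq_le y i.castSucc
          have h₃ := norm_padRight_weighted_sq_le y i.succ
          simp only [Fin.val_castSucc, Fin.val_succ, Nat.cast_add, Nat.cast_one] at h₂ h₃
          linarith
      _ ≤ (4 - 4 / (N + 1) ^ 2) * weightSq N i * ‖y‖ ^ 2 := by
          gcongr
          linarith [weightSq_sub_one_add_weightSq_add_one_le (N := N) (x := i)]
  calc ‖contraction u v y i‖ ^ 2 = ‖couplingMap u v z i‖ ^ 2 / (4 * weightSq N i) := by
        rw [contraction, comp_apply, comp_apply, diagonalSMul_apply, norm_smul, mul_pow,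
          Real.norm_eq_abs, sq_abs, inv_pow, mul_pow, weight_sq]
        ring
    _ ≤ (1 - 1 / (N + 1) ^ 2) * ‖y‖ ^ 2 := by
        rw [div_le_iff₀ (by positivity)]; exact hcoupling.trans_eq (by ring)
    _ ≤ ((1 - 1 / (2 * (N + 1) ^ 2)) * ‖y‖) ^ 2 := by
        rw [mul_pow]
        gcongr
        field_simp
        nlinarith

theorem exists_rightInverse_commutatorMap (h : OrthogonalIsometries u v) (N : ℕ) :
    ∃ R : (Fin N → A) →L[ℂ] (Fin (N + 1) → A),
      (∀ c, commutatorMap u v (R c) = c) ∧ ∀ c, ‖R c‖ ≤ 2 * (N + 1) ^ 2 * ‖c‖ := by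
  have hθ : 1 - 1 / (2 * ((N : ℝ) + 1) ^ 2) < 1 := by
    have : 0 < 1 / (2 * ((N : ℝ) + 1) ^ 2) := by positivity
    linarith
  obtain ⟨S, hS, hS_norm⟩ :=
    exists_rightInverse_one_sub (contraction u v) hθ (norm_contraction_le h)
  set H : (Fin N → A) →L[ℂ] (Fin N → A) := diagonalSMul fun i => (2 * weight N i)⁻¹
  refine ⟨weightedLift u v ∘L S ∘L H, fun c => funext fun i => ?_, fun c => ?_⟩
  · have hw : 2 * weight N i ≠ 0 := by linarith [one_le_weight i]
    rw [comp_apply, comp_apply, commutatorMap_weightedLift h, hS,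
      diagonalSMul_apply, smul_smul, mul_inv_cancel₀ hw, one_smul]
  · have hH : ‖H c‖ ≤ 2⁻¹ * ‖c‖ := by
      refine norm_diagonalSMul_le (by norm_num) (fun i => ?_) c
      have hw := one_le_weight i
      rw [abs_of_pos (by positivity)]
      exact inv_anti₀ two_pos (by linarith)
    have hSH : ‖S (H c)‖ ≤ 2 * (N + 1) ^ 2 * ‖H c‖ := by
      have := hS_norm (H c)
      rwa [sub_sub_cancel, one_div, inv_mul_le_iff₀ (by positivity)] at this
    calc ‖weightedLift u v (S (H c))‖ ≤ 2 * ‖S (H c)‖ := norm_weightedLift_le h _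
      _ ≤ 2 * (2 * (N + 1) ^ 2 * (2⁻¹ * ‖c‖)) := by gcongr; exact hSH.trans (by gcongr)
      _ = 2 * (N + 1) ^ 2 * ‖c‖ := by ring

end CuntzCommutator

open CuntzCommutator in
/-- Proposition 2.7.  Let `A` be a unital C*-algebra containing isometries `u, v` with
`u*u = v*v = uu* + vv* = 1`, `u*v = v*u = 0`, let `n ≥ 2` and let
`T : Aⁿ → A^{n-1}`, `T(b₁,…,bₙ) = ([v,bᵢ] + [u,bᵢ₋₁])_{i=2}^{n}` (sup norms on products,
which is the norm on Lean's pi types).  Then `T` has a bounded linear right inverse `R`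
with `‖R c‖ ≤ 8√2·n²·‖c‖` for all `c`.
(0-based indexing: the output coordinate `i : Fin (n-1)` corresponds to `i+2` in the
paper, and `b j` for `j : Fin n` corresponds to `b_{j+1}`.) -/
theorem right_inverse_of_commutator_map {A : Type*} [CStarAlgebra A] (u v : A)
    (huu : star u * u = 1) (hvv : star v * v = 1)
    (huv : star u * v = 0) (hvu : star v * u = 0)
    {n : ℕ} (hn : 2 ≤ n)
    (T : (Fin n → A) →L[ℂ] (Fin (n - 1) → A))
    (hT : ∀ (b : Fin n → A) (i : Fin (n - 1)),
      T b i =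
        (v * b ⟨i.val + 1, by have := i.isLt; omega⟩
            - b ⟨i.val + 1, by have := i.isLt; omega⟩ * v)
          + (u * b ⟨i.val, by have := i.isLt; omega⟩
              - b ⟨i.val, by have := i.isLt; omega⟩ * u)) :
    ∃ R : (Fin (n - 1) → A) →L[ℂ] (Fin n → A),
      (∀ c, T (R c) = c) ∧
      (∀ c, ‖R c‖ ≤ 8 * Real.sqrt 2 * (n : ℝ) ^ 2 * ‖c‖) := by
  obtain ⟨N, rfl⟩ : ∃ N, n = N + 1 := ⟨n - 1, by omega⟩
  obtain ⟨R, hTR, hR⟩ := exists_rightInverse_commutatorMap ⟨huu, hvv, huv, hvu⟩ N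
  refine ⟨R, fun c => funext fun i => ?_, fun c => (hR c).trans ?_⟩
  · rw [hT]
    exact congrFun (hTR c) i
  · push_cast
    gcongr
    linarith [Real.one_lt_sqrt_two]
end
end

section
/- Let X and Y be Banach spaces, T, F : X → Y bounded linear operators, G : X × X → Y a bounded bilinear map with ‖G(x₁,x₂)‖ ≤ r·‖x₁‖·‖x₂‖ for some r > 0, and a ∈ Y. Suppose T has a bounded linear right inverse R : Y → X (i.e. T ∘ R = id). If δ > 0 satisfies δ·(2‖F‖·‖R‖ + 4r·‖R‖²·‖a‖) < 1, then there exists b ∈ X with ‖b‖ ≤ 2‖R‖·‖a‖ and T b = a + δ·F(b) + δ·G(b,b). -/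
/-- Lemma 2.9 (Tao).  Let `X, Y` be Banach spaces, `T, F : X → Y` bounded linear,
`G : X × X → Y` bounded bilinear with bound `r > 0`, `a ∈ Y`, and let `R` be a bounded
linear right inverse of `T`.  If `δ > 0` satisfies
`δ·(2‖F‖‖R‖ + 4r‖R‖²‖a‖) < 1`, then there is `b ∈ X` with `‖b‖ ≤ 2‖R‖‖a‖` solving
`T b = a + δ·F(b) + δ·G(b,b)`. -/
theorem abstract_quadratic_equation_solvable {𝕜 : Type*} [RCLike 𝕜]
    {X Y : Type*} [NormedAddCommGroup X] [NormedSpace 𝕜 X] [CompleteSpace X]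
    [NormedAddCommGroup Y] [NormedSpace 𝕜 Y] [CompleteSpace Y]
    (T F : X →L[𝕜] Y) (G : X →L[𝕜] X →L[𝕜] Y) (r : ℝ) (hr : 0 < r)
    (hG : ∀ x₁ x₂ : X, ‖G x₁ x₂‖ ≤ r * ‖x₁‖ * ‖x₂‖)
    (a : Y) (R : Y →L[𝕜] X) (hR : ∀ y : Y, T (R y) = y)
    (δ : ℝ) (hδ : 0 < δ)
    (hsmall : δ * (2 * ‖F‖ * ‖R‖ + 4 * r * ‖R‖ ^ 2 * ‖a‖) < 1) :
    ∃ b : X, ‖b‖ ≤ 2 * ‖R‖ * ‖a‖ ∧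
      T b = a + (δ : 𝕜) • F b + (δ : 𝕜) • G b b := by
  have hM0 : (0 : ℝ) ≤ 2 * ‖R‖ * ‖a‖ := by positivity
  have hδnorm : ‖(δ : 𝕜)‖ = δ := by
    rw [RCLike.norm_ofReal, abs_of_pos hδ]
  set f : X → X := fun b => R (a + (δ : 𝕜) • F b + (δ : 𝕜) • G b b) with hfdef
  set s : Set X := Metric.closedBall (0 : X) (2 * ‖R‖ * ‖a‖) with hs
  have hsc : IsComplete s := Metric.isClosed_closedBall.isComplete
  have hmem : ∀ b : X, b ∈ s ↔ ‖b‖ ≤ 2 * ‖R‖ * ‖a‖ := fun b => mem_closedBall_zero_iff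
  -- maps to
  have hmaps : Set.MapsTo f s s := by
    intro b hb
    rw [hmem] at hb ⊢
    have h1 : ‖f b‖ ≤ ‖R‖ * ‖a + (δ : 𝕜) • F b + (δ : 𝕜) • G b b‖ := R.le_opNorm _
    have h2 : ‖a + (δ : 𝕜) • F b + (δ : 𝕜) • G b b‖ ≤ ‖a‖ + δ * ‖F b‖ + δ * ‖G b b‖ := by
      calc ‖a + (δ : 𝕜) • F b + (δ : 𝕜) • G b b‖
          ≤ ‖a + (δ : 𝕜) • F b‖ + ‖(δ : 𝕜) • G b b‖ := norm_add_le _ _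
        _ ≤ ‖a‖ + ‖(δ : 𝕜) • F b‖ + ‖(δ : 𝕜) • G b b‖ := by
            have := norm_add_le a ((δ : 𝕜) • F b); linarith
        _ = ‖a‖ + δ * ‖F b‖ + δ * ‖G b b‖ := by rw [norm_smul, norm_smul, hδnorm]
    have e1 : ‖F b‖ ≤ ‖F‖ * (2 * ‖R‖ * ‖a‖) :=
      (F.le_opNorm _).trans (by gcongr)
    have e2 : ‖G b b‖ ≤ r * (2 * ‖R‖ * ‖a‖) * (2 * ‖R‖ * ‖a‖) :=
      (hG b b).trans (by gcongr)
    calc ‖f b‖ ≤ ‖R‖ * ‖a + (δ : 𝕜) • F b + (δ : 𝕜) • G b b‖ := h1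
      _ ≤ ‖R‖ * (‖a‖ + δ * ‖F b‖ + δ * ‖G b b‖) :=
          mul_le_mul_of_nonneg_left h2 (norm_nonneg _)
      _ ≤ ‖R‖ * (‖a‖ + δ * (‖F‖ * (2 * ‖R‖ * ‖a‖)) +
            δ * (r * (2 * ‖R‖ * ‖a‖) * (2 * ‖R‖ * ‖a‖))) := by gcongr
      _ = ‖R‖ * ‖a‖ + ‖R‖ * ‖a‖ * (δ * (2 * ‖F‖ * ‖R‖ + 4 * r * ‖R‖ ^ 2 * ‖a‖)) := by ring
      _ ≤ ‖R‖ * ‖a‖ + ‖R‖ * ‖a‖ * 1 := by gcongr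
      _ = 2 * ‖R‖ * ‖a‖ := by ring
  -- Lipschitz constant
  have hKr0 : (0 : ℝ) ≤ δ * (‖F‖ * ‖R‖ + 4 * r * ‖R‖ ^ 2 * ‖a‖) := by positivity
  have hKr1 : δ * (‖F‖ * ‖R‖ + 4 * r * ‖R‖ ^ 2 * ‖a‖) < 1 := by
    nlinarith [mul_nonneg hδ.le (mul_nonneg (norm_nonneg F) (norm_nonneg R))]
  set K : NNReal := Real.toNNReal (δ * (‖F‖ * ‖R‖ + 4 * r * ‖R‖ ^ 2 * ‖a‖)) with hK
  have hK' : (K : ℝ) = δ * (‖F‖ * ‖R‖ + 4 * r * ‖R‖ ^ 2 * ‖a‖) := Real.coe_toNNReal _ hKr0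
  have hK1 : K < 1 := by
    rw [hK, ← Real.toNNReal_one]
    exact (Real.toNNReal_lt_toNNReal_iff one_pos).mpr hKr1
  have hlip : LipschitzOnWith K f s := by
    apply LipschitzOnWith.of_dist_le_mul
    intro b hb b' hb'
    rw [hmem] at hb hb'
    rw [dist_eq_norm, dist_eq_norm, hK']
    have hdiff : f b - f b' = R ((δ : 𝕜) • F (b - b') +
        ((δ : 𝕜) • G (b - b') b + (δ : 𝕜) • G b' (b - b'))) := by
      rw [← map_sub]
      congr 1
      simp only [map_sub, ContinuousLinearMap.sub_apply, smul_sub]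
      abel
    have h1 : ‖f b - f b'‖ ≤
        ‖R‖ * (δ * ‖F (b - b')‖ + (δ * ‖G (b - b') b‖ + δ * ‖G b' (b - b')‖)) := by
      rw [hdiff]
      refine (R.le_opNorm _).trans (mul_le_mul_of_nonneg_left ?_ (norm_nonneg _))
      calc ‖(δ : 𝕜) • F (b - b') + ((δ : 𝕜) • G (b - b') b + (δ : 𝕜) • G b' (b - b'))‖
          ≤ ‖(δ : 𝕜) • F (b - b')‖ + ‖(δ : 𝕜) • G (b - b') b + (δ : 𝕜) • G b' (b - b')‖ :=
            norm_add_le _ _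
        _ ≤ ‖(δ : 𝕜) • F (b - b')‖ + (‖(δ : 𝕜) • G (b - b') b‖ + ‖(δ : 𝕜) • G b' (b - b')‖) := by
            have := norm_add_le ((δ : 𝕜) • G (b - b') b) ((δ : 𝕜) • G b' (b - b'))
            linarith
        _ = δ * ‖F (b - b')‖ + (δ * ‖G (b - b') b‖ + δ * ‖G b' (b - b')‖) := by
            simp only [norm_smul, hδnorm]
    have e3 : ‖F (b - b')‖ ≤ ‖F‖ * ‖b - b'‖ := F.le_opNorm _
    have e4 : ‖G (b - b') b‖ ≤ r * ‖b - b'‖ * (2 * ‖R‖ * ‖a‖) :=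
      (hG _ _).trans (by gcongr)
    have e5 : ‖G b' (b - b')‖ ≤ r * (2 * ‖R‖ * ‖a‖) * ‖b - b'‖ :=
      (hG _ _).trans (by gcongr)
    calc ‖f b - f b'‖
        ≤ ‖R‖ * (δ * ‖F (b - b')‖ + (δ * ‖G (b - b') b‖ + δ * ‖G b' (b - b')‖)) := h1
      _ ≤ ‖R‖ * (δ * (‖F‖ * ‖b - b'‖) + (δ * (r * ‖b - b'‖ * (2 * ‖R‖ * ‖a‖)) +
            δ * (r * (2 * ‖R‖ * ‖a‖) * ‖b - b'‖))) := by gcongr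
      _ = δ * (‖F‖ * ‖R‖ + 4 * r * ‖R‖ ^ 2 * ‖a‖) * ‖b - b'‖ := by ring
  have hcontr : ContractingWith K (hmaps.restrict f s s) := ⟨hK1, hlip.to_restrict⟩
  have h0s : (0 : X) ∈ s := by rw [hmem]; simp [hM0]
  have h0fin : edist (0 : X) (f 0) ≠ ⊤ := edist_ne_top _ _
  set b : X := ContractingWith.efixedPoint' f hsc hmaps hcontr 0 h0s h0fin with hb
  have hbmem : b ∈ s := ContractingWith.efixedPoint_mem' hsc hmaps hcontr h0s h0fin
  have hbfix : f b = b := ContractingWith.efixedPoint_isFixedPt' hsc hmaps hcontr h0s h0fin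
  refine ⟨b, (hmem b).mp hbmem, ?_⟩
  conv_lhs => rw [← hbfix]
  exact hR _
end
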